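/- arXiv:1408.0619 — 2 statements merged into one kernel-verified Lean document; each statement's English description precedes it below -/
import Mathlib

section
/- Suppose the statistic s is a balancing score in the sense P(X = x | T = t, s(X) = σ) = P(X = x | s(X) = σ) for all t, x, σ with positive-probability conditioning events. Then X and T are conditionally independent given s(X). -/
open MeasureTheory

theorem measure_inter_mul_eq_of_div_eq {Ω : Type*} [MeasurableSpace Ω] {P : Measure Ω}
    [IsFiniteMeasure P] {A B C : Set Ω} (hC : 0 < P C)
    (hcond : 0 < P (B ∩ C) → P (A ∩ (B ∩ C)) / P (B ∩ C) = P (A ∩ C) / P C) :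
    P (A ∩ (B ∩ C)) * P C = P (A ∩ C) * P (B ∩ C) := by
  rcases eq_zero_or_pos (P (B ∩ C)) with hBC | hBC
  · have hABC : P (A ∩ (B ∩ C)) = 0 :=
      measure_mono_null Set.inter_subset_right hBC
    simp [hABC, hBC]
  · rw [mul_comm, mul_comm (P (A ∩ C))]
    exact (ENNReal.div_eq_div_iff hC.ne' (measure_ne_top P C) hBC.ne'
      (measure_ne_top P _)).mp (hcond hBC)

theorem balancing_implies_cond_indep_general
    {Ω 𝒳 𝒯 𝒮 : Type*} [MeasurableSpace Ω]
    (P : Measure Ω) [IsProbabilityMeasure P]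
    (X : Ω → 𝒳) (T : Ω → 𝒯) (s : 𝒳 → 𝒮)
    (hbal : ∀ (x : 𝒳) (t : 𝒯) (σ : 𝒮),
      0 < P {ω | T ω = t ∧ s (X ω) = σ} → 0 < P {ω | s (X ω) = σ} →
      P {ω | X ω = x ∧ T ω = t ∧ s (X ω) = σ} / P {ω | T ω = t ∧ s (X ω) = σ} =
      P {ω | X ω = x ∧ s (X ω) = σ} / P {ω | s (X ω) = σ}) :
    ∀ (x : 𝒳) (t : 𝒯) (σ : 𝒮), 0 < P {ω | s (X ω) = σ} →
      P {ω | X ω = x ∧ T ω = t ∧ s (X ω) = σ} * P {ω | s (X ω) = σ} =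
      P {ω | X ω = x ∧ s (X ω) = σ} * P {ω | T ω = t ∧ s (X ω) = σ} := fun x t σ hσ =>
  measure_inter_mul_eq_of_div_eq (A := {ω | X ω = x}) (B := {ω | T ω = t}) hσ
    fun htσ => hbal x t σ htσ hσ

/-- If s is a balancing score, i.e.
P(X = x | T = t, s(X) = σ) = P(X = x | s(X) = σ), then X ⫫ T | s(X). -/
theorem balancing_implies_cond_indep
    {Ω 𝒳 𝒯 𝒮 : Type*} [MeasurableSpace Ω] [Countable 𝒳] [Countable 𝒯]
    (P : Measure Ω) [IsProbabilityMeasure P]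
    (X : Ω → 𝒳) (T : Ω → 𝒯) (s : 𝒳 → 𝒮)
    (hbal : ∀ (x : 𝒳) (t : 𝒯) (σ : 𝒮),
      0 < P {ω | T ω = t ∧ s (X ω) = σ} → 0 < P {ω | s (X ω) = σ} →
      P {ω | X ω = x ∧ T ω = t ∧ s (X ω) = σ} / P {ω | T ω = t ∧ s (X ω) = σ} =
      P {ω | X ω = x ∧ s (X ω) = σ} / P {ω | s (X ω) = σ}) :
    ∀ (x : 𝒳) (t : 𝒯) (σ : 𝒮), 0 < P {ω | s (X ω) = σ} →
      P {ω | X ω = x ∧ T ω = t ∧ s (X ω) = σ} * P {ω | s (X ω) = σ} =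
      P {ω | X ω = x ∧ s (X ω) = σ} * P {ω | T ω = t ∧ s (X ω) = σ} :=
  balancing_implies_cond_indep_general P X T s hbal
end

section
/- Let b be a balancing score, i.e., X ⫫ T | b(X), and let s = g∘b for some function g. If T ⫫ b(X) | s(X), then X ⫫ T | s(X), i.e., s is also balancing. -/
open MeasureTheory

/-- If X ⫫ T | b(X), s = g ∘ b, and T ⫫ b(X) | s(X), then
X ⫫ T | s(X). -/
theorem coarsening_preserves_balancing
    {Ω 𝒳 𝒯 ℬ 𝒮 : Type*} [MeasurableSpace Ω] [Countable 𝒳] [Countable 𝒯]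
    (P : Measure Ω) [IsProbabilityMeasure P]
    (X : Ω → 𝒳) (T : Ω → 𝒯) (b : 𝒳 → ℬ) (g : ℬ → 𝒮) (s : 𝒳 → 𝒮)
    (hs : ∀ x, s x = g (b x))
    -- X ⫫ T | b(X)
    (h1 : ∀ (x : 𝒳) (t : 𝒯) (β : ℬ), 0 < P {ω | b (X ω) = β} →
      P {ω | X ω = x ∧ T ω = t ∧ b (X ω) = β} * P {ω | b (X ω) = β} =
      P {ω | X ω = x ∧ b (X ω) = β} * P {ω | T ω = t ∧ b (X ω) = β})
    -- T ⫫ b(X) | s(X)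
    (h2 : ∀ (t : 𝒯) (β : ℬ) (σ : 𝒮), 0 < P {ω | s (X ω) = σ} →
      P {ω | T ω = t ∧ b (X ω) = β ∧ s (X ω) = σ} * P {ω | s (X ω) = σ} =
      P {ω | T ω = t ∧ s (X ω) = σ} * P {ω | b (X ω) = β ∧ s (X ω) = σ}) :
    -- X ⫫ T | s(X)
    ∀ (x : 𝒳) (t : 𝒯) (σ : 𝒮), 0 < P {ω | s (X ω) = σ} →
      P {ω | X ω = x ∧ T ω = t ∧ s (X ω) = σ} * P {ω | s (X ω) = σ} =
      P {ω | X ω = x ∧ s (X ω) = σ} * P {ω | T ω = t ∧ s (X ω) = σ} := by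
  intro x t σ hσ
  by_cases hxs : s x = σ
  · -- s x = σ; set β := b x
    set β := b x with hβ
    -- {b(X)=β} ⊆ {s(X)=σ}
    have hsub : ∀ ω, b (X ω) = β → s (X ω) = σ := by
      intro ω h
      rw [hs, h, ← hs, hxs]
    have e1 : {ω | X ω = x ∧ T ω = t ∧ s (X ω) = σ} =
        {ω | X ω = x ∧ T ω = t ∧ b (X ω) = β} := by
      ext ω; constructor
      · rintro ⟨h1', h2', _⟩; exact ⟨h1', h2', by rw [h1']⟩
      · rintro ⟨h1', h2', h3'⟩; exact ⟨h1', h2', hsub ω h3'⟩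
    have e2 : {ω | X ω = x ∧ s (X ω) = σ} = {ω | X ω = x ∧ b (X ω) = β} := by
      ext ω; constructor
      · rintro ⟨h1', _⟩; exact ⟨h1', by rw [h1']⟩
      · rintro ⟨h1', h3'⟩; exact ⟨h1', hsub ω h3'⟩
    have e3 : {ω | T ω = t ∧ b (X ω) = β ∧ s (X ω) = σ} =
        {ω | T ω = t ∧ b (X ω) = β} := by
      ext ω; constructor
      · rintro ⟨h1', h2', _⟩; exact ⟨h1', h2'⟩
      · rintro ⟨h1', h2'⟩; exact ⟨h1', h2', hsub ω h2'⟩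
    have e4 : {ω | b (X ω) = β ∧ s (X ω) = σ} = {ω | b (X ω) = β} := by
      ext ω; constructor
      · rintro ⟨h1', _⟩; exact h1'
      · intro h1'; exact ⟨h1', hsub ω h1'⟩
    rw [e1, e2]
    by_cases hb : P {ω | b (X ω) = β} = 0
    · have z1 : P {ω | X ω = x ∧ T ω = t ∧ b (X ω) = β} = 0 :=
        measure_mono_null (fun ω h => h.2.2) hb
      have z2 : P {ω | X ω = x ∧ b (X ω) = β} = 0 :=
        measure_mono_null (fun ω h => h.2) hb
      rw [z1, z2, zero_mul, zero_mul]
    · have hbpos : 0 < P {ω | b (X ω) = β} := pos_iff_ne_zero.mpr hb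
      have H1 := h1 x t β hbpos
      have H2 := h2 t β σ hσ
      rw [e3, e4] at H2
      have hbfin : P {ω | b (X ω) = β} ≠ ⊤ := measure_ne_top P _
      rw [← ENNReal.mul_right_inj hb hbfin]
      calc P {ω | b (X ω) = β} *
            (P {ω | X ω = x ∧ T ω = t ∧ b (X ω) = β} * P {ω | s (X ω) = σ})
          = (P {ω | X ω = x ∧ T ω = t ∧ b (X ω) = β} * P {ω | b (X ω) = β}) *
            P {ω | s (X ω) = σ} := by ring
        _ = (P {ω | X ω = x ∧ b (X ω) = β} * P {ω | T ω = t ∧ b (X ω) = β}) *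
            P {ω | s (X ω) = σ} := by rw [H1]
        _ = P {ω | X ω = x ∧ b (X ω) = β} *
            (P {ω | T ω = t ∧ b (X ω) = β} * P {ω | s (X ω) = σ}) := by ring
        _ = P {ω | X ω = x ∧ b (X ω) = β} *
            (P {ω | T ω = t ∧ s (X ω) = σ} * P {ω | b (X ω) = β}) := by rw [H2]
        _ = P {ω | b (X ω) = β} *
            (P {ω | X ω = x ∧ b (X ω) = β} *
              P {ω | T ω = t ∧ s (X ω) = σ}) := by ring
  · -- s x ≠ σ: both X-events empty
    have z1 : {ω | X ω = x ∧ T ω = t ∧ s (X ω) = σ} = (∅ : Set Ω) := by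
      ext ω; simp only [Set.mem_setOf_eq, Set.mem_empty_iff_false, iff_false]
      rintro ⟨h1', _, h3'⟩; exact hxs (h1' ▸ h3')
    have z2 : {ω | X ω = x ∧ s (X ω) = σ} = (∅ : Set Ω) := by
      ext ω; simp only [Set.mem_setOf_eq, Set.mem_empty_iff_false, iff_false]
      rintro ⟨h1', h3'⟩; exact hxs (h1' ▸ h3')
    rw [z1, z2, measure_empty, zero_mul, zero_mul]
end
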